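/- For a₀ > 0, the function v(t) = 36·a₀·t/(3 + √(6t²+9))² solves the singular initial value problem dv/dt = (v/t)·(2√3/√(2t²+3) - 1) with v(0) = 0 and v'(0) = a₀, and attains its global maximum on (0,∞) at t = 3√2/2 with value (2√2/3)·a₀. -/

import Mathlib

noncomputable def vComp (a₀ t : ℝ) : ℝ := 36 * a₀ * t / (3 + Real.sqrt (6 * t ^ 2 + 9)) ^ 2

/-!
Write `s = √(6t² + 9)`. Since `6t² = s² - 9`, the quotient rule simplifies to
`v' = 36 a₀ (6 - s) / (s (3 + s)²)`, and `2√3/√(2t² + 3) = 6/s`, which gives both `v'(0) = a₀`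
and the differential equation. For the maximum put `w = 3 + s`, so that `6t² = w (w - 6)`; then
`2w⁴ - (54t)² = 2w (w - 9)² (w + 18) ≥ 0`, i.e. `54t ≤ √2 w²`, with equality at `w = 9`,
which is `t = 3√2/2`.
-/

open Real

theorem hasDerivAt_vComp (a₀ t : ℝ) :
    HasDerivAt (vComp a₀)
      (36 * a₀ * (6 - √(6 * t ^ 2 + 9)) / (√(6 * t ^ 2 + 9) * (3 + √(6 * t ^ 2 + 9)) ^ 2)) t := by
  have hpoly : HasDerivAt (fun t : ℝ => 6 * t ^ 2 + 9) (12 * t) t := by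
    simpa using ((hasDerivAt_pow 2 t).const_mul 6).add_const 9 |>.congr_deriv (by ring)
  have hquot : HasDerivAt (vComp a₀) _ t := ((hasDerivAt_id t).const_mul (36 * a₀)).div
    (((hpoly.sqrt (by positivity)).const_add 3).pow 2) (by positivity)
  refine hquot.congr_deriv ?_
  set s := √(6 * t ^ 2 + 9)
  have hs : 0 < s := by positivity
  have hs_sq : s ^ 2 = 6 * t ^ 2 + 9 := sq_sqrt (by positivity)
  simp only [id]
  field_simp
  linear_combination 4 * a₀ * (s + 3) * hs_sq

theorem two_mul_sqrt_three_div_sqrt (t : ℝ) :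
    2 * √3 / √(2 * t ^ 2 + 3) = 6 / √(6 * t ^ 2 + 9) := by
  have h3 : √3 ^ 2 = 3 := sq_sqrt (by norm_num)
  have hpos : 0 < √(2 * t ^ 2 + 3) := by positivity
  rw [show 6 * t ^ 2 + 9 = 3 * (2 * t ^ 2 + 3) by ring, sqrt_mul (by norm_num)]
  field_simp
  linear_combination 2 * h3

theorem mul_le_sqrt_two_mul_sq (t : ℝ) : 54 * t ≤ √2 * (3 + √(6 * t ^ 2 + 9)) ^ 2 := by
  have hs_sq : √(6 * t ^ 2 + 9) ^ 2 = 6 * t ^ 2 + 9 := sq_sqrt (by positivity)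
  set w := 3 + √(6 * t ^ 2 + 9)
  have hw : 0 ≤ w := by positivity
  have h2 : √2 ^ 2 = 2 := sq_sqrt (by norm_num)
  have hfactor : 0 ≤ w * (w - 9) ^ 2 * (w + 18) := by
    have := sq_nonneg (w - 9); positivity
  refine (le_abs_self _).trans (abs_le_of_sq_le_sq ?_ (by positivity))
  linear_combination 2 * hfactor - 486 * hs_sq - w ^ 4 * h2

theorem vComp_le {a₀ : ℝ} (ha₀ : 0 ≤ a₀) (t : ℝ) : vComp a₀ t ≤ 2 * √2 / 3 * a₀ := by
  rw [vComp, div_le_iff₀ (by positivity)]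
  nlinarith [mul_le_mul_of_nonneg_left (mul_le_sqrt_two_mul_sq t) ha₀]

theorem vComp_three_mul_sqrt_two_div_two (a₀ : ℝ) :
    vComp a₀ (3 * √2 / 2) = 2 * √2 / 3 * a₀ := by
  have h2 : √2 ^ 2 = 2 := sq_sqrt (by norm_num)
  have h36 : 6 * (3 * √2 / 2) ^ 2 + 9 = 6 ^ 2 := by linear_combination (27 / 2) * h2
  rw [vComp, h36, sqrt_sq (by norm_num)]
  ring

/-- For `a₀ > 0`, the function `v(t) = 36a₀t/(3+√(6t²+9))²` solves the singular IVP
`dv/dt = (v/t)(2√3/√(2t²+3) - 1)` with `v(0) = 0`, `v'(0) = a₀`, and attains its global maximum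
on `(0,∞)` at `t = 3√2/2` with value `(2√2/3)·a₀`. -/
theorem vComp_solves_and_max (a₀ : ℝ) (ha₀ : 0 < a₀) :
    vComp a₀ 0 = 0 ∧
    HasDerivAt (vComp a₀) a₀ 0 ∧
    (∀ t > (0 : ℝ),
      HasDerivAt (vComp a₀)
        (vComp a₀ t / t * (2 * Real.sqrt 3 / Real.sqrt (2 * t ^ 2 + 3) - 1)) t) ∧
    vComp a₀ (3 * Real.sqrt 2 / 2) = 2 * Real.sqrt 2 / 3 * a₀ ∧
    ∀ t > (0 : ℝ), vComp a₀ t ≤ vComp a₀ (3 * Real.sqrt 2 / 2) := by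
  refine ⟨by simp [vComp], ?_, fun t ht => ?_, vComp_three_mul_sqrt_two_div_two a₀,
    fun t _ => (vComp_three_mul_sqrt_two_div_two a₀).symm ▸ vComp_le ha₀.le t⟩
  · convert hasDerivAt_vComp a₀ 0 using 1
    rw [show (6 : ℝ) * 0 ^ 2 + 9 = 3 ^ 2 by norm_num, sqrt_sq (by norm_num)]
    ring
  · convert hasDerivAt_vComp a₀ t using 1
    rw [two_mul_sqrt_three_div_sqrt, vComp]
    field_simp
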